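/- arXiv:2209.02101 — 6 statements merged into one kernel-verified Lean document; each statement's English description precedes it below -/
import Mathlib

section
/- If σ is a unique sink orientation of a grid Γ = (M, K) with K = (κ_1, …, κ_d), then the refined index r_σ is a bijection from the vertex set V of Γ onto the product set {0, …, |κ_1|−1} × ⋯ × {0, …, |κ_d|−1}. -/
/-- `κ` is the partition of the direction set `M` of a grid into `d` blocks,
each of size at least `2`. -/
def IsGridPartition (M : Finset ℕ) {d : ℕ} (κ : Fin d → Finset ℕ) : Prop :=
  (∀ i, 2 ≤ (κ i).card) ∧
  (∀ i j, i ≠ j → Disjoint (κ i) (κ j)) ∧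
  Finset.univ.biUnion κ = M

/-- A vertex of the grid is a subset `p ⊆ M` meeting every block in exactly one element. -/
def IsGridVertex (M : Finset ℕ) {d : ℕ} (κ : Fin d → Finset ℕ) (p : Finset ℕ) : Prop :=
  p ⊆ M ∧ ∀ i, (p ∩ κ i).card = 1

/-- `σ` is an outmap: on each vertex `p` it yields a subset of `M` disjoint from `p`. -/
def IsOutmap (M : Finset ℕ) {d : ℕ} (κ : Fin d → Finset ℕ) (σ : Finset ℕ → Finset ℕ) : Prop :=
  ∀ p, IsGridVertex M κ p → σ p ⊆ M ∧ σ p ∩ p = ∅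

/-- `M'` induces a (nonempty) subgrid of the grid with directions `M` and blocks `κ`. -/
def IsSubgrid (M M' : Finset ℕ) {d : ℕ} (κ : Fin d → Finset ℕ) : Prop :=
  M' ⊆ M ∧ ∀ i, (κ i ∩ M').Nonempty

/-- A vertex of the subgrid induced by `M'`. -/
def IsSubgridVertex (M' : Finset ℕ) {d : ℕ} (κ : Fin d → Finset ℕ) (p : Finset ℕ) : Prop :=
  p ⊆ M' ∧ ∀ i, (p ∩ (κ i ∩ M')).card = 1

/-- `σ` is a unique sink orientation: every nonempty induced subgrid has exactly one
sink with respect to the restricted outmap `σ'(p) = σ(p) ∩ M'`. -/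
def IsUSO (M : Finset ℕ) {d : ℕ} (κ : Fin d → Finset ℕ) (σ : Finset ℕ → Finset ℕ) : Prop :=
  ∀ M', IsSubgrid M M' κ → ∃! p, IsSubgridVertex M' κ p ∧ σ p ∩ M' = ∅

/-!
Count the pairs `(p, S)` where `S = (S_i)` picks `s_i ≥ 1` directions of every block `κ_i` and `p`
is the sink of the subgrid `⋃ S_i`. By the unique sink property there are `∏ C(|κ_i|, s_i)` of
them. On the other hand `p` is that sink iff every `S_i` contains the direction of `p` in `κ_i` and
avoids `σ(p)`, so `p` is the sink of `∏ C(|κ_i| - 1 - r_i(p), s_i - 1)` of these subgrids.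
Taking `s_i = |κ_i| - a_i` and writing `N(b)` for the number of vertices of refined index `b`,
`∑_b N(b) ∏ C(|κ_i| - 1 - b_i, |κ_i| - a_i - 1) = ∏ C(|κ_i|, |κ_i| - a_i)` for every `a` in the box.
This system is unitriangular for the product order, and by the hockey stick identity the constant
function `1` solves it too; hence `N ≡ 1`.
-/

open Finset Function

theorem sum_range_choose_eq_choose_succ (n k : ℕ) :
    ∑ j ∈ range n, j.choose k = n.choose (k + 1) := by
  induction n with
  | zero => simp
  | succ n ih => rw [sum_range_succ, ih, Nat.choose_succ_succ, add_comm]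

theorem sum_piFinset_prod_choose {ι : Type*} [Fintype ι] [DecidableEq ι] (k a : ι → ℕ)
    (ha : ∀ i, a i < k i) :
    ∑ b ∈ Fintype.piFinset (fun i => range (k i)), ∏ i, (k i - 1 - b i).choose (k i - a i - 1)
      = ∏ i, (k i).choose (k i - a i) := by
  rw [← prod_univ_sum (fun i => range (k i)) fun i j => (k i - 1 - j).choose (k i - a i - 1)]
  refine prod_congr rfl fun i _ => ?_
  rw [sum_range_reflect (fun j => j.choose (k i - a i - 1)), sum_range_choose_eq_choose_succ]
  congr 1
  have := ha i
  omega

theorem card_filter_powersetCard_superset_disjoint {α : Type*} [DecidableEq α]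
    {A B D : Finset α} {s : ℕ} (hAB : A ⊆ B) (hAD : Disjoint A D) (hs : #A ≤ s) :
    #{S ∈ powersetCard s B | A ⊆ S ∧ Disjoint D S} = (#B - #A - #(B ∩ D)).choose (s - #A) := by
  have hcard : #(B \ (A ∪ D)) = #B - #A - #(B ∩ D) := by
    rw [card_sdiff, union_inter_distrib_right, inter_eq_left.mpr hAB,
      card_union_of_disjoint (hAD.mono_right inter_subset_left), inter_comm D, Nat.sub_sub]
  rw [← hcard, ← card_powersetCard]
  refine card_nbij' (· \ A) (A ∪ ·) (fun S hS => ?_) (fun T hT => ?_) (fun S hS => ?_)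
    (fun T hT => ?_)
  · simp only [coe_filter, mem_powersetCard] at hS
    obtain ⟨⟨hSB, hScard⟩, hAS, hDS⟩ := hS
    simp only [mem_coe, mem_powersetCard]
    refine ⟨fun x hx => ?_, by rw [card_sdiff_of_subset hAS, hScard]⟩
    obtain ⟨hxS, hxA⟩ := mem_sdiff.mp hx
    exact mem_sdiff.mpr ⟨hSB hxS, by simp [hxA, disjoint_right.mp hDS hxS]⟩
  · simp only [mem_coe, mem_powersetCard, subset_sdiff] at hT
    obtain ⟨⟨hTB, hT⟩, hTcard⟩ := hT
    rw [disjoint_union_right] at hT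
    simp only [coe_filter, mem_powersetCard]
    refine ⟨⟨union_subset hAB hTB, ?_⟩, subset_union_left,
      disjoint_union_right.mpr ⟨hAD.symm, hT.2.symm⟩⟩
    rw [card_union_of_disjoint hT.1.symm, hTcard]
    omega
  · exact union_sdiff_of_subset (mem_filter.mp hS).2.1
  · simp only [mem_coe, mem_powersetCard, subset_sdiff, disjoint_union_right] at hT
    exact union_sdiff_cancel_left hT.1.2.1.symm

theorem eqOn_of_sum_mul_eq_of_unitriangular {α R : Type*} [PartialOrder α] [WellFoundedLT α]
    [DecidableEq α] [Semiring R] [IsCancelAdd R] {s : Finset α} {c : α → α → R} {f g : α → R}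
    (hdiag : ∀ a ∈ s, c a a = 1) (hlower : ∀ a ∈ s, ∀ b ∈ s, c b a ≠ 0 → b ≤ a)
    (h : ∀ a ∈ s, ∑ b ∈ s, f b * c b a = ∑ b ∈ s, g b * c b a) :
    Set.EqOn f g s := by
  refine fun a => WellFoundedLT.induction (motive := fun a => a ∈ s → f a = g a) a
    fun a ih ha => ?_
  have hrest : ∑ b ∈ s.erase a, f b * c b a = ∑ b ∈ s.erase a, g b * c b a := by
    refine sum_congr rfl fun b hb => ?_
    obtain ⟨hba, hb⟩ := mem_erase.mp hb
    by_cases hc : c b a = 0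
    · simp [hc]
    · rw [ih b ((hlower a ha b hb hc).lt_of_ne hba) hb]
  have := h a ha
  rw [← add_sum_erase s _ ha, ← add_sum_erase s _ ha, hrest, hdiag a ha, mul_one, mul_one] at this
  exact add_right_cancel this

theorem Set.bijOn_of_card_filter_eq_one {α β : Type*} [DecidableEq β] {s : Finset α} {t : Set β}
    {f : α → β} (hf : Set.MapsTo f s t) (h : ∀ b ∈ t, #{a ∈ s | f a = b} = 1) :
    Set.BijOn f s t := by
  refine ⟨hf, fun a₁ ha₁ a₂ ha₂ heq => ?_, fun b hb => ?_⟩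
  · exact card_le_one.mp (h _ (hf ha₁)).le a₁ (mem_filter.mpr ⟨ha₁, rfl⟩) a₂
      (mem_filter.mpr ⟨ha₂, heq.symm⟩)
  · obtain ⟨a, ha⟩ := card_pos.mp (h b hb).symm.le
    exact ⟨a, (mem_filter.mp ha).1, (mem_filter.mp ha).2⟩

section Grid

open scoped Classical

variable {M M' : Finset ℕ} {d : ℕ} {κ : Fin d → Finset ℕ} {σ : Finset ℕ → Finset ℕ}
  {p : Finset ℕ}

def refinedIndex (σ : Finset ℕ → Finset ℕ) (κ : Fin d → Finset ℕ) (p : Finset ℕ) : Fin d → ℕ :=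
  fun i => #(σ p ∩ κ i)

noncomputable def gridVertices (M : Finset ℕ) (κ : Fin d → Finset ℕ) : Finset (Finset ℕ) :=
  {p ∈ M.powerset | IsGridVertex M κ p}

theorem mem_gridVertices : p ∈ gridVertices M κ ↔ IsGridVertex M κ p := by
  simp only [gridVertices, mem_filter, mem_powerset, and_iff_right_iff_imp]
  exact And.left

def IsSubgridSink (M' : Finset ℕ) (κ : Fin d → Finset ℕ) (σ : Finset ℕ → Finset ℕ)
    (p : Finset ℕ) : Prop :=
  IsSubgridVertex M' κ p ∧ σ p ∩ M' = ∅

theorem IsGridVertex.refinedIndex_lt (hσ : IsOutmap M κ σ) (hp : IsGridVertex M κ p)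
    (i : Fin d) : refinedIndex σ κ p i < #(κ i) := by
  have hdisj : Disjoint (σ p ∩ κ i) (p ∩ κ i) :=
    (disjoint_iff_inter_eq_empty.mpr (hσ p hp).2).mono inter_subset_left inter_subset_left
  calc refinedIndex σ κ p i < #(σ p ∩ κ i) + #(p ∩ κ i) := by
        rw [hp.2 i]; exact Nat.lt_succ_self _
    _ = #(σ p ∩ κ i ∪ p ∩ κ i) := (card_union_of_disjoint hdisj).symm
    _ ≤ #(κ i) := card_le_card (union_subset inter_subset_right inter_subset_right)

theorem IsSubgridVertex.isGridVertex (hM' : M' ⊆ M) (hp : IsSubgridVertex M' κ p) :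
    IsGridVertex M κ p := by
  refine ⟨hp.1.trans hM', fun i => ?_⟩
  rw [← hp.2 i, inter_left_comm, inter_eq_left.mpr hp.1, inter_comm]

theorem inter_biUnion_of_subset (hκ : Pairwise (Disjoint on κ)) {S : Fin d → Finset ℕ}
    (hS : ∀ i, S i ⊆ κ i) (i : Fin d) : κ i ∩ univ.biUnion S = S i := by
  ext x
  simp only [mem_inter, mem_biUnion, mem_univ, true_and]
  refine ⟨fun ⟨hx, j, hxj⟩ => ?_, fun hx => ⟨hS i hx, i, hx⟩⟩
  obtain rfl : i = j := by_contra fun hij => disjoint_left.mp (hκ hij) hx (hS j hxj)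
  exact hxj

theorem isSubgrid_biUnion (hκ : Pairwise (Disjoint on κ)) (hM : univ.biUnion κ = M)
    {S : Fin d → Finset ℕ} (hS : ∀ i, S i ⊆ κ i) (hne : ∀ i, (S i).Nonempty) :
    IsSubgrid M (univ.biUnion S) κ :=
  ⟨hM ▸ biUnion_mono fun i _ => hS i, fun i => inter_biUnion_of_subset hκ hS i ▸ hne i⟩

theorem isSubgridSink_biUnion_iff (hκ : Pairwise (Disjoint on κ)) (hM : univ.biUnion κ = M)
    (hp : IsGridVertex M κ p) {S : Fin d → Finset ℕ} (hS : ∀ i, S i ⊆ κ i) :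
    IsSubgridSink (univ.biUnion S) κ σ p ↔ ∀ i, p ∩ κ i ⊆ S i ∧ Disjoint (σ p) (S i) := by
  simp only [IsSubgridSink, IsSubgridVertex, inter_biUnion_of_subset hκ hS,
    ← disjoint_iff_inter_eq_empty, disjoint_biUnion_right, mem_univ, true_imp_iff]
  constructor
  · rintro ⟨⟨hpS, -⟩, hσS⟩ i
    refine ⟨fun x hx => ?_, hσS i⟩
    rw [← inter_biUnion_of_subset hκ hS i]
    exact mem_inter.mpr ⟨(mem_inter.mp hx).2, hpS (mem_inter.mp hx).1⟩
  · intro h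
    have hpS : ∀ i, p ∩ S i = p ∩ κ i := fun i =>
      (inter_subset_inter_left (hS i)).antisymm (subset_inter inter_subset_left (h i).1)
    refine ⟨⟨fun x hx => ?_, fun i => by rw [hpS, hp.2 i]⟩, fun i => (h i).2⟩
    obtain ⟨i, -, hxi⟩ := mem_biUnion.mp (hM ▸ hp.1 hx)
    exact mem_biUnion.mpr ⟨i, mem_univ i, (h i).1 (mem_inter.mpr ⟨hx, hxi⟩)⟩

theorem card_filter_isSubgridSink_biUnion (hκ : IsGridPartition M κ) (hσ : IsOutmap M κ σ)
    (hp : IsGridVertex M κ p) {s : Fin d → ℕ} (hs : ∀ i, 1 ≤ s i) :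
    #{S ∈ Fintype.piFinset fun i => powersetCard (s i) (κ i) |
        IsSubgridSink (univ.biUnion S) κ σ p}
      = ∏ i, (#(κ i) - 1 - refinedIndex σ κ p i).choose (s i - 1) := by
  have hfilter : {S ∈ Fintype.piFinset fun i => powersetCard (s i) (κ i) |
      IsSubgridSink (univ.biUnion S) κ σ p} =
      Fintype.piFinset fun i =>
        {T ∈ powersetCard (s i) (κ i) | p ∩ κ i ⊆ T ∧ Disjoint (σ p) T} := by
    ext S
    simp only [mem_filter, Fintype.mem_piFinset]
    have hsink := fun (hS : ∀ i, S i ∈ powersetCard (s i) (κ i)) =>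
      isSubgridSink_biUnion_iff (σ := σ) hκ.2.1 hκ.2.2 hp fun i =>
        (mem_powersetCard.mp (hS i)).1
    exact ⟨fun ⟨hS, h⟩ i => ⟨hS i, (hsink hS).mp h i⟩,
      fun h => ⟨fun i => (h i).1, (hsink fun i => (h i).1).mpr fun i => (h i).2⟩⟩
  rw [hfilter, Fintype.card_piFinset]
  refine prod_congr rfl fun i _ => ?_
  have hdisj : Disjoint (p ∩ κ i) (σ p) :=
    (disjoint_iff_inter_eq_empty.mpr (hσ p hp).2).symm.mono_left inter_subset_left
  rw [card_filter_powersetCard_superset_disjoint inter_subset_right hdisj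
    (by rw [hp.2 i]; exact hs i), hp.2 i, inter_comm (κ i)]
  rfl

theorem IsUSO.card_filter_isSubgridSink_eq_one (huso : IsUSO M κ σ) (hM' : IsSubgrid M M' κ) :
    #{p ∈ gridVertices M κ | IsSubgridSink M' κ σ p} = 1 := by
  obtain ⟨q, hq, huniq⟩ := huso M' hM'
  refine card_eq_one.mpr ⟨q, eq_singleton_iff_unique_mem.mpr ⟨?_, fun p hp => huniq p ?_⟩⟩
  · exact mem_filter.mpr ⟨mem_gridVertices.mpr (hq.1.isGridVertex hM'.1), hq⟩
  · exact (mem_filter.mp hp).2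

theorem IsUSO.sum_prod_choose (huso : IsUSO M κ σ) (hκ : IsGridPartition M κ)
    (hσ : IsOutmap M κ σ) {s : Fin d → ℕ} (hs : ∀ i, 1 ≤ s i) :
    ∑ p ∈ gridVertices M κ, ∏ i, (#(κ i) - 1 - refinedIndex σ κ p i).choose (s i - 1)
      = ∏ i, (#(κ i)).choose (s i) := by
  set T := Fintype.piFinset fun i => powersetCard (s i) (κ i)
  have hT : ∀ S ∈ T, ∀ i, S i ⊆ κ i ∧ #(S i) = s i := fun S hS i =>
    mem_powersetCard.mp (Fintype.mem_piFinset.mp hS i)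
  let IsSinkOf (p : Finset ℕ) (S : Fin d → Finset ℕ) : Prop :=
    IsSubgridSink (univ.biUnion S) κ σ p
  calc _ = ∑ p ∈ gridVertices M κ, #(T.bipartiteAbove IsSinkOf p) :=
        sum_congr rfl fun p hp =>
          (card_filter_isSubgridSink_biUnion hκ hσ (mem_gridVertices.mp hp) hs).symm
    _ = ∑ S ∈ T, #((gridVertices M κ).bipartiteBelow IsSinkOf S) :=
        sum_card_bipartiteAbove_eq_sum_card_bipartiteBelow _
    _ = ∑ S ∈ T, 1 := sum_congr rfl fun S hS =>
        huso.card_filter_isSubgridSink_eq_one <| isSubgrid_biUnion hκ.2.1 hκ.2.2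
          (fun i => (hT S hS i).1) fun i => card_pos.mp ((hT S hS i).2 ▸ hs i)
    _ = ∏ i, (#(κ i)).choose (s i) := by simp [T]

theorem IsUSO.card_filter_refinedIndex_eq_one (huso : IsUSO M κ σ) (hκ : IsGridPartition M κ)
    (hσ : IsOutmap M κ σ) {a : Fin d → ℕ} (ha : ∀ i, a i < #(κ i)) :
    #{p ∈ gridVertices M κ | refinedIndex σ κ p = a} = 1 := by
  set box := Fintype.piFinset fun i => range #(κ i)
  have hbox : ∀ b, b ∈ box ↔ ∀ i, b i < #(κ i) := by simp [box]
  have hmaps : ∀ p ∈ gridVertices M κ, refinedIndex σ κ p ∈ box := fun p hp =>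
    (hbox _).mpr ((mem_gridVertices.mp hp).refinedIndex_lt hσ)
  let c (b a : Fin d → ℕ) : ℕ := ∏ i, (#(κ i) - 1 - b i).choose (#(κ i) - a i - 1)
  refine eqOn_of_sum_mul_eq_of_unitriangular (s := box) (c := c)
    (f := fun b => #{p ∈ gridVertices M κ | refinedIndex σ κ p = b}) (g := fun _ => 1)
    (fun a _ => ?_) (fun a ha b hb hc => ?_) (fun a ha => ?_) ((hbox a).mpr ha)
  · exact prod_eq_one fun i _ => by rw [Nat.sub_right_comm, Nat.choose_self]
  · refine fun i => show b i ≤ a i from ?_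
    have hle : #(κ i) - a i - 1 ≤ #(κ i) - 1 - b i :=
      Nat.choose_ne_zero_iff.mp (prod_ne_zero_iff.mp hc i (mem_univ i))
    have := (hbox a).mp ha i
    have := (hbox b).mp hb i
    omega
  · have ha := (hbox a).mp ha
    calc ∑ b ∈ box, #{p ∈ gridVertices M κ | refinedIndex σ κ p = b} * c b a
        = ∑ p ∈ gridVertices M κ, c (refinedIndex σ κ p) a := by
          rw [← sum_fiberwise_of_maps_to' hmaps fun b => c b a]
          simp only [sum_const, smul_eq_mul]
      _ = ∏ i, (#(κ i)).choose (#(κ i) - a i) :=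
          huso.sum_prod_choose hκ hσ fun i => Nat.le_sub_of_add_le' (ha i)
      _ = ∑ b ∈ box, 1 * c b a := by
          simp only [one_mul]
          exact (sum_piFinset_prod_choose _ _ ha).symm

end Grid

theorem refinedIndex_bijective_general
    (M : Finset ℕ) (d : ℕ) (κ : Fin d → Finset ℕ)
    (hκ : IsGridPartition M κ)
    (σ : Finset ℕ → Finset ℕ) (hσ : IsOutmap M κ σ)
    (huso : IsUSO M κ σ) :
    Set.BijOn (fun p => fun i => (σ p ∩ κ i).card)
      {p | IsGridVertex M κ p}
      {f : Fin d → ℕ | ∀ i, f i < (κ i).card} := by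
  have hV : {p | IsGridVertex M κ p} = (gridVertices M κ : Set (Finset ℕ)) :=
    Set.ext fun _ => mem_gridVertices.symm
  rw [hV]
  exact Set.bijOn_of_card_filter_eq_one (f := refinedIndex σ κ)
    (fun p hp => (mem_gridVertices.mp hp).refinedIndex_lt hσ)
    fun a ha => huso.card_filter_refinedIndex_eq_one hκ hσ ha

/-- If `σ` is a unique sink orientation of the grid `(M, κ)`, then the refined index
`r_σ(p) = (|σ(p) ∩ κ_1|, …, |σ(p) ∩ κ_d|)` is a bijection from the vertex set onto
`{0, …, |κ_1|−1} × ⋯ × {0, …, |κ_d|−1}`. -/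
theorem refinedIndex_bijective
    (M : Finset ℕ) (d : ℕ) (hd : 0 < d) (κ : Fin d → Finset ℕ)
    (hκ : IsGridPartition M κ)
    (σ : Finset ℕ → Finset ℕ) (hσ : IsOutmap M κ σ)
    (huso : IsUSO M κ σ) :
    Set.BijOn (fun p => fun i => (σ p ∩ κ i).card)
      {p | IsGridVertex M κ p}
      {f : Fin d → ℕ | ∀ i, f i < (κ i).card} :=
  refinedIndex_bijective_general M d κ hκ σ hσ huso
end

section
/- Grid-USO is a total search problem: for every grid Γ = (M, K) and every function σ : V → 𝒫(M) on its vertex set V, at least one of the following exists: (GU1) a vertex p ∈ V with σ(p) = ∅; (GUV1) a vertex p ∈ V with p ∩ σ(p) ≠ ∅; or (GUV2) a nonempty induced subgrid Γ′ of Γ and two distinct vertices p ≠ q of Γ′ with r_{σ′}(p) = r_{σ′}(q), where σ′(x) = σ(x) ∩ M′ is the restriction of σ to Γ′. -/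
/-- Grid-USO is a total search problem: for every grid `(M, κ)` and every function `σ`
mapping each vertex to a subset of `M`, there exists either (GU1) a sink, (GUV1) a vertex
with a loop, or (GUV2) a nonempty induced subgrid with two distinct vertices of equal
refined index with respect to the restricted outmap. -/
theorem gridUSO_total
    (M : Finset ℕ) (d : ℕ) (hd : 0 < d) (κ : Fin d → Finset ℕ)
    (hκ : IsGridPartition M κ)
    (σ : Finset ℕ → Finset ℕ)
    (hσ : ∀ p, IsGridVertex M κ p → σ p ⊆ M) :
    (∃ p, IsGridVertex M κ p ∧ σ p = ∅) ∨
    (∃ p, IsGridVertex M κ p ∧ (p ∩ σ p).Nonempty) ∨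
    (∃ M', IsSubgrid M M' κ ∧
      ∃ p q, IsSubgridVertex M' κ p ∧ IsSubgridVertex M' κ q ∧ p ≠ q ∧
        ∀ i, ((σ p ∩ M') ∩ (κ i ∩ M')).card = ((σ q ∩ M') ∩ (κ i ∩ M')).card) := by
  classical
  by_cases h1 : ∃ p, IsGridVertex M κ p ∧ σ p = ∅
  · exact Or.inl h1
  by_cases h2 : ∃ p, IsGridVertex M κ p ∧ (p ∩ σ p).Nonempty
  · exact Or.inr (Or.inl h2)
  refine Or.inr (Or.inr ?_)
  push_neg at h1 h2
  obtain ⟨hcard2, hdisj, hunion⟩ := hκ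
  have hsub : ∀ i, κ i ⊆ M := fun i =>
    hunion ▸ Finset.subset_biUnion_of_mem κ (Finset.mem_univ i)
  -- the set of vertices
  set V : Finset (Finset ℕ) := M.powerset.filter (fun p => IsGridVertex M κ p) with hV
  have memV : ∀ p, p ∈ V ↔ IsGridVertex M κ p := by
    intro p
    simp only [hV, Finset.mem_filter, Finset.mem_powerset, and_iff_right_iff_imp]
    exact fun h => h.1
  -- each choice function gives a vertex; this bounds V.card from below
  have key : ∀ f : Fin d → ℕ, (∀ i, f i ∈ κ i) →
      ∀ i, Finset.image f Finset.univ ∩ κ i = {f i} := by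
    intro f hf i
    ext x
    simp only [Finset.mem_inter, Finset.mem_image, Finset.mem_univ, true_and,
      Finset.mem_singleton]
    constructor
    · rintro ⟨⟨j, rfl⟩, hx⟩
      by_contra hne
      have hji : j ≠ i := by rintro rfl; exact hne rfl
      have hmem : f j ∈ κ j ∩ κ i := Finset.mem_inter.mpr ⟨hf j, hx⟩
      rw [Finset.disjoint_iff_inter_eq_empty.mp (hdisj j i hji)] at hmem
      exact absurd hmem (Finset.notMem_empty _)
    · rintro rfl
      exact ⟨⟨i, rfl⟩, hf i⟩
  have hVmem : ∀ f : Fin d → ℕ, (∀ i, f i ∈ κ i) → Finset.image f Finset.univ ∈ V := by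
    intro f hf
    rw [memV]
    constructor
    · intro x hx
      obtain ⟨j, _, rfl⟩ := Finset.mem_image.mp hx
      exact hsub j (hf j)
    · intro i
      rw [key f hf i, Finset.card_singleton]
  have hVcard : ∏ i, (κ i).card ≤ V.card := by
    rw [← Fintype.card_piFinset κ]
    apply Finset.card_le_card_of_injOn (fun f => Finset.image f Finset.univ)
    · intro f hf
      exact hVmem f (by simpa [Fintype.mem_piFinset] using hf)
    · intro f hf g hg hfg
      have hf' : ∀ i, f i ∈ κ i := by simpa [Fintype.mem_piFinset] using hf
      have hg' : ∀ i, g i ∈ κ i := by simpa [Fintype.mem_piFinset] using hg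
      funext i
      simp only at hfg
      have := key f hf' i
      rw [hfg, key g hg' i] at this
      exact (Finset.singleton_injective this).symm
  -- the target set of refined indices
  set T : Finset (Fin d → ℕ) :=
    (Fintype.piFinset (fun i => Finset.range ((κ i).card))).erase (fun _ => 0) with hT
  have hTcard : T.card = (∏ i, (κ i).card) - 1 := by
    rw [hT, Finset.card_erase_of_mem, Fintype.card_piFinset]
    · simp
    · simp only [Fintype.mem_piFinset, Finset.mem_range]
      intro i
      exact lt_of_lt_of_le (by norm_num) (hcard2 i)
  have hprodpos : 0 < ∏ i, (κ i).card :=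
    Finset.prod_pos fun i _ => lt_of_lt_of_le (by norm_num) (hcard2 i)
  -- pigeonhole on the refined index map
  have hmaps : ∀ p ∈ V, (fun i => (σ p ∩ κ i).card) ∈ T := by
    intro p hp
    rw [memV] at hp
    have hdisjp : ∀ x ∈ p, x ∉ σ p := by
      intro x hx hxs
      exact (Finset.not_nonempty_iff_eq_empty.mpr (h2 p hp)) ⟨x, Finset.mem_inter.mpr ⟨hx, hxs⟩⟩
    rw [hT, Finset.mem_erase]
    constructor
    · -- refined index is not identically zero
      intro h0
      apply Finset.nonempty_iff_ne_empty.mp (h1 p hp)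
      by_contra hne
      obtain ⟨x, hx⟩ := Finset.nonempty_iff_ne_empty.mpr hne
      have hxM : x ∈ M := hσ p hp hx
      rw [← hunion] at hxM
      obtain ⟨i, _, hxi⟩ := Finset.mem_biUnion.mp hxM
      have : x ∈ σ p ∩ κ i := Finset.mem_inter.mpr ⟨hx, hxi⟩
      have hcard : (σ p ∩ κ i).card ≠ 0 :=
        Finset.card_ne_zero_of_mem this
      exact hcard (congrFun h0 i)
    · simp only [Fintype.mem_piFinset, Finset.mem_range]
      intro i
      have hssub : σ p ∩ κ i ⊂ κ i := by
        constructor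
        · exact Finset.inter_subset_right
        · intro hle
          obtain ⟨x, hx⟩ := Finset.card_pos.mp
            (by rw [hp.2 i]; norm_num : 0 < (p ∩ κ i).card)
          obtain ⟨hxp, hxi⟩ := Finset.mem_inter.mp hx
          exact hdisjp x hxp (Finset.mem_inter.mp (hle hxi)).1
      exact Finset.card_lt_card hssub
  obtain ⟨p, hp, q, hq, hpq, heq⟩ :=
    Finset.exists_ne_map_eq_of_card_lt_of_maps_to
      (by omega : T.card < V.card) hmaps
  rw [memV] at hp hq
  -- conclude with the full grid M' = M
  refine ⟨M, ⟨subset_refl M, fun i => ?_⟩, p, q, ?_, ?_, hpq, ?_⟩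
  · rw [Finset.inter_eq_left.mpr (hsub i)]
    exact Finset.card_pos.mp (lt_of_lt_of_le (by norm_num) (hcard2 i))
  · exact ⟨hp.1, fun i => by rw [Finset.inter_eq_left.mpr (hsub i)]; exact hp.2 i⟩
  · exact ⟨hq.1, fun i => by rw [Finset.inter_eq_left.mpr (hsub i)]; exact hq.2 i⟩
  · intro i
    rw [Finset.inter_eq_left.mpr (hsub i), Finset.inter_eq_left.mpr (hσ p hp),
      Finset.inter_eq_left.mpr (hσ q hq)]
    exact congrFun heq i
end

section
/- Let σ be an outmap on a grid Γ = (M, K) (so σ(p) ∩ p = ∅ for all vertices p). If σ has no sink, i.e., σ(p) ≠ ∅ for every vertex p, then the refined index r_σ is not injective: there exist distinct vertices p ≠ q with r_σ(p) = r_σ(q). -/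
/-- If `σ` is an outmap on the grid `(M, κ)` with no sink (i.e. `σ(p) ≠ ∅` for every
vertex `p`), then the refined index is not injective: there exist two distinct vertices
with equal refined indices. -/
theorem refinedIndex_not_injective_of_no_sink
    (M : Finset ℕ) (d : ℕ) (hd : 0 < d) (κ : Fin d → Finset ℕ)
    (hκ : IsGridPartition M κ)
    (σ : Finset ℕ → Finset ℕ) (hσ : IsOutmap M κ σ)
    (hnosink : ∀ p, IsGridVertex M κ p → σ p ≠ ∅) :
    ∃ p q, IsGridVertex M κ p ∧ IsGridVertex M κ q ∧ p ≠ q ∧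
      ∀ i, (σ p ∩ κ i).card = (σ q ∩ κ i).card := by

  classical
  obtain ⟨hcard2, hdisj, hbi⟩ := hκ
  -- the set of vertices
  set S : Finset (Finset ℕ) := M.powerset.filter (fun p => ∀ i, (p ∩ κ i).card = 1) with hS
  have hSmem : ∀ p, p ∈ S ↔ IsGridVertex M κ p := by
    intro p
    simp [hS, IsGridVertex, Finset.mem_filter, Finset.mem_powerset]
  -- the target set of possible refined indices (excluding 0)
  set T : Finset (Fin d → ℕ) :=
    (Fintype.piFinset fun i => Finset.range ((κ i).card)).erase (fun _ => 0) with hT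
  -- injection from tuples into S shows S is large
  have hκM : ∀ i, κ i ⊆ M := by
    intro i x hx
    rw [← hbi]
    exact Finset.mem_biUnion.2 ⟨i, Finset.mem_univ i, hx⟩
  have hginter : ∀ f : Fin d → ℕ, (∀ i, f i ∈ κ i) → ∀ i,
      (Finset.image f Finset.univ) ∩ κ i = {f i} := by
    intro f hf i
    apply Finset.Subset.antisymm
    · intro x hx
      rw [Finset.mem_inter, Finset.mem_image] at hx
      obtain ⟨⟨j, _, rfl⟩, hxi⟩ := hx
      rcases eq_or_ne j i with rfl | hji
      · simp
      · exact absurd (Finset.mem_inter.2 ⟨hf j, hxi⟩)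
          (by simpa [Finset.disjoint_iff_inter_eq_empty.1 (hdisj j i hji)] using
            Finset.not_mem_empty (f j))
    · intro x hx
      rw [Finset.mem_singleton] at hx
      subst hx
      exact Finset.mem_inter.2 ⟨Finset.mem_image.2 ⟨i, Finset.mem_univ i, rfl⟩, hf i⟩
  have hcardS : ∏ i, (κ i).card ≤ S.card := by
    rw [← Fintype.card_piFinset]
    apply Finset.card_le_card_of_injOn (fun f => Finset.image f Finset.univ)
    · intro f hf
      rw [Finset.mem_coe, Fintype.mem_piFinset] at hf
      rw [Finset.mem_coe, hSmem]
      constructor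
      · intro x hx
        rw [Finset.mem_image] at hx
        obtain ⟨j, _, rfl⟩ := hx
        exact hκM j (hf j)
      · intro i
        rw [hginter f hf i, Finset.card_singleton]
    · intro f hf g hg hfg
      rw [Finset.mem_coe, Fintype.mem_piFinset] at hf hg
      funext i
      have h1 := hginter f hf i
      have h2 := hginter g hg i
      simp only [] at hfg
      rw [hfg, h2] at h1
      exact (Finset.singleton_injective h1.symm)
  -- cardinality of T
  have h0mem : (fun _ : Fin d => 0) ∈ Fintype.piFinset fun i => Finset.range ((κ i).card) := by
    rw [Fintype.mem_piFinset]
    intro i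
    exact Finset.mem_range.2 (lt_of_lt_of_le (by norm_num) (hcard2 i))
  have hcardT : T.card = (∏ i, (κ i).card) - 1 := by
    rw [hT, Finset.card_erase_of_mem h0mem, Fintype.card_piFinset]
    simp
  have hprodpos : 0 < ∏ i, (κ i).card :=
    Finset.prod_pos fun i _ => lt_of_lt_of_le (by norm_num) (hcard2 i)
  have hlt : T.card < S.card := by
    rw [hcardT]
    exact lt_of_lt_of_le (Nat.sub_lt hprodpos (by norm_num)) hcardS
  -- the refined index maps S into T
  have hmaps : ∀ p ∈ S, (fun i => (σ p ∩ κ i).card) ∈ T := by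
    intro p hp
    rw [hSmem] at hp
    obtain ⟨hσM, hσp⟩ := hσ p hp
    rw [hT, Finset.mem_erase, Fintype.mem_piFinset]
    constructor
    · intro h0
      apply hnosink p hp
      apply Finset.eq_empty_of_forall_notMem
      intro x hx
      have hxM : x ∈ M := hσM hx
      rw [← hbi, Finset.mem_biUnion] at hxM
      obtain ⟨i, _, hxi⟩ := hxM
      have : (σ p ∩ κ i).card = 0 := congrFun h0 i
      rw [Finset.card_eq_zero] at this
      exact absurd (Finset.mem_inter.2 ⟨hx, hxi⟩) (this ▸ Finset.notMem_empty x)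
    · intro i
      rw [Finset.mem_range]
      apply Finset.card_lt_card
      constructor
      · exact Finset.inter_subset_right
      · intro hsub
        obtain ⟨x, hx⟩ := Finset.card_eq_one.1 (hp.2 i)
        have hxp : x ∈ p ∩ κ i := hx ▸ Finset.mem_singleton_self x
        rw [Finset.mem_inter] at hxp
        have hxσ : x ∈ σ p := (Finset.mem_inter.1 (hsub hxp.2)).1
        exact absurd (Finset.mem_inter.2 ⟨hxσ, hxp.1⟩)
          (hσp ▸ Finset.notMem_empty x)
  obtain ⟨p, hp, q, hq, hpq, heq⟩ :=
    Finset.exists_ne_map_eq_of_card_lt_of_maps_to hlt hmaps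
  exact ⟨p, q, (hSmem p).1 hp, (hSmem q).1 hq, hpq, fun i => congrFun heq i⟩
end

section
/- Unique Forward EOPL always has a solution of type UF1: for every d ∈ ℕ⁺ and every pair of functions S : {0,1}^d → {0,1}^d and c : {0,1}^d → ℕ with S(0^d) ≠ 0^d and c(0^d) = 0, there exists a bit string v ∈ {0,1}^d with S(v) ≠ v and either S(S(v)) = S(v) or c(S(v)) ≤ c(v). -/
/-!
Suppose there is no UF1 solution. Then the successor of a node is again a node and has strictly
larger cost, so the costs along the path `0^d, S(0^d), S(S(0^d)), …` strictly increase. The path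
therefore never revisits a bit string, which is impossible in the finite set `{0,1}^d`.
-/

section NoSolution

variable {α β : Type*} [LinearOrder β] {S : α → α} {c : α → β}

theorem iterate_succ_ne_of_forall_node {v₀ : α} (h₀ : S v₀ ≠ v₀)
    (h : ∀ v, S v ≠ v → S (S v) ≠ S v ∧ c v < c (S v)) (n : ℕ) :
    S (S^[n] v₀) ≠ S^[n] v₀ := by
  induction n with
  | zero => exact h₀
  | succ n ih =>
    rw [Function.iterate_succ_apply']
    exact (h _ ih).1

theorem strictMono_cost_iterate_of_forall_node {v₀ : α} (h₀ : S v₀ ≠ v₀)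
    (h : ∀ v, S v ≠ v → S (S v) ≠ S v ∧ c v < c (S v)) :
    StrictMono fun n => c (S^[n] v₀) :=
  strictMono_nat_of_lt_succ fun n => by
    rw [Function.iterate_succ_apply']
    exact (h _ (iterate_succ_ne_of_forall_node h₀ h n)).2

end NoSolution

theorem exists_uf1_of_finite {α β : Type*} [Finite α] [LinearOrder β] (S : α → α) (c : α → β)
    {v₀ : α} (h₀ : S v₀ ≠ v₀) :
    ∃ v, S v ≠ v ∧ (S (S v) = S v ∨ c (S v) ≤ c v) := by
  by_contra! h
  have hinj : Function.Injective fun n => S^[n] v₀ :=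
    Function.Injective.of_comp (f := c) (strictMono_cost_iterate_of_forall_node h₀ h).injective
  exact not_injective_infinite_finite _ hinj

theorem uf1_exists_general
    (d : ℕ)
    (S : (Fin d → Bool) → (Fin d → Bool)) (c : (Fin d → Bool) → ℕ)
    (hS : S (fun _ => false) ≠ (fun _ => false)) :
    ∃ v : Fin d → Bool, S v ≠ v ∧ (S (S v) = S v ∨ c (S v) ≤ c v) :=
  exists_uf1_of_finite S c hS

/-- Unique Forward EOPL always has a solution of type UF1: for every `d ≥ 1` and all
functions `S : {0,1}^d → {0,1}^d` and `c : {0,1}^d → ℕ` with `S(0^d) ≠ 0^d` and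
`c(0^d) = 0`, there is a bit string `v` with `S(v) ≠ v` and either `S(S(v)) = S(v)` or
`c(S(v)) ≤ c(v)`. -/
theorem uf1_exists
    (d : ℕ) (hd : 0 < d)
    (S : (Fin d → Bool) → (Fin d → Bool)) (c : (Fin d → Bool) → ℕ)
    (hS : S (fun _ => false) ≠ (fun _ => false))
    (hc : c (fun _ => false) = 0) :
    ∃ v : Fin d → Bool, S v ≠ v ∧ (S (S v) = S v ∨ c (S v) ≤ c v) :=
  uf1_exists_general d S c hS
end

section
/- In a Unique Forward EOPL instance, if no UFV1 violation and no UFV2 violation exists, then the UF1 solution is unique: there is exactly one node v with S(v) ≠ v and (S(S(v)) = S(v) or c(S(v)) ≤ c(v)). -/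
/-! A node of maximal cost is a UF1 solution. Without UFV2 violations every UF1 solution has
maximal cost among the nodes, so two UF1 solutions have equal cost and coincide, as there is
no UFV1 violation. -/

namespace UniqueForwardEOPL

variable {α : Type*} (S : α → α) (c : α → ℕ)

def IsUF1Solution (v : α) : Prop :=
  S v ≠ v ∧ (S (S v) = S v ∨ c (S v) ≤ c v)

variable {S c}

theorem isUF1Solution_of_forall_cost_le {v : α} (hv : S v ≠ v)
    (hmax : ∀ w, S w ≠ w → c w ≤ c v) : IsUF1Solution S c v := by
  refine ⟨hv, ?_⟩
  by_cases hSS : S (S v) = S v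
  · exact Or.inl hSS
  · exact Or.inr (hmax (S v) hSS)

theorem exists_node_forall_cost_le [Finite α] {v₀ : α} (hv₀ : S v₀ ≠ v₀) :
    ∃ v, S v ≠ v ∧ ∀ w, S w ≠ w → c w ≤ c v :=
  Set.exists_max_image {v | S v ≠ v} c (Set.toFinite _) ⟨v₀, hv₀⟩

theorem exists_isUF1Solution [Finite α] {v₀ : α} (hv₀ : S v₀ ≠ v₀) :
    ∃ v, IsUF1Solution S c v :=
  let ⟨v, hv, hmax⟩ := exists_node_forall_cost_le (c := c) hv₀
  ⟨v, isUF1Solution_of_forall_cost_le hv hmax⟩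

theorem IsUF1Solution.cost_le {v w : α} (hv : IsUF1Solution S c v) (hw : S w ≠ w)
    (hUFV2 : ¬ ∃ v w, v ≠ w ∧ IsUF1Solution S c v ∧ S w ≠ w ∧ c v < c w) :
    c w ≤ c v := by
  by_contra! hlt
  exact hUFV2 ⟨v, w, fun h => hlt.ne (h ▸ rfl), hv, hw, hlt⟩

end UniqueForwardEOPL

open UniqueForwardEOPL in
theorem uf1_unique_of_no_violations_general
    (d : ℕ)
    (S : (Fin d → Bool) → (Fin d → Bool)) (c : (Fin d → Bool) → ℕ)
    (hS : S (fun _ => false) ≠ (fun _ => false))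
    (hUFV1 : ¬ ∃ v w : Fin d → Bool, v ≠ w ∧ S v ≠ v ∧ S w ≠ w ∧
      (c v = c w ∨ (c v < c w ∧ c w < c (S v))))
    (hUFV2 : ¬ ∃ v w : Fin d → Bool, v ≠ w ∧
      (S v ≠ v ∧ (S (S v) = S v ∨ c (S v) ≤ c v)) ∧ S w ≠ w ∧ c v < c w) :
    ∃! v : Fin d → Bool, S v ≠ v ∧ (S (S v) = S v ∨ c (S v) ≤ c v) := by
  obtain ⟨v, hv⟩ := exists_isUF1Solution (c := c) hS
  refine ⟨v, hv, fun w (hw : IsUF1Solution S c w) => ?_⟩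
  have hcost : c w = c v := le_antisymm (hv.cost_le hw.1 hUFV2) (hw.cost_le hv.1 hUFV2)
  by_contra hne
  exact hUFV1 ⟨w, v, hne, hw.1, hv.1, Or.inl hcost⟩

/-- In a Unique Forward EOPL instance with no UFV1 violation and no UFV2 violation, the
UF1 solution is unique: there is exactly one `v` with `S(v) ≠ v` and
(`S(S(v)) = S(v)` or `c(S(v)) ≤ c(v)`). -/
theorem uf1_unique_of_no_violations
    (d : ℕ) (hd : 0 < d)
    (S : (Fin d → Bool) → (Fin d → Bool)) (c : (Fin d → Bool) → ℕ)
    (hS : S (fun _ => false) ≠ (fun _ => false))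
    (hc : c (fun _ => false) = 0)
    (hUFV1 : ¬ ∃ v w : Fin d → Bool, v ≠ w ∧ S v ≠ v ∧ S w ≠ w ∧
      (c v = c w ∨ (c v < c w ∧ c w < c (S v))))
    (hUFV2 : ¬ ∃ v w : Fin d → Bool, v ≠ w ∧
      (S v ≠ v ∧ (S (S v) = S v ∨ c (S v) ≤ c v)) ∧ S w ≠ w ∧ c v < c w) :
    ∃! v : Fin d → Bool, S v ≠ v ∧ (S (S v) = S v ∨ c (S v) ≤ c v) :=
  uf1_unique_of_no_violations_general d S c hS hUFV1 hUFV2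
end

section
/- In a Unique Forward EOPL instance, if no UFV1 violation and no UFV2 violation exists, then the nodes form a single line starting at 0^d: every node w (S(w) ≠ w) is of the form w = S^k(0^d) for some k ≥ 0, where the cost strictly increases along the iterates S^0(0^d), S^1(0^d), …, S^k(0^d). -/
/-!
Induct on the cost of a node `w ≠ 0^d`. Among the nodes cheaper than `w` (there is one, `0^d`),
let `v` be the most expensive. Since `w` is more expensive, `v` is not a UF1 solution (no UFV2),
so `S v` is a node with `c v < c (S v)`; maximality gives `c w ≤ c (S v)`, absence of UFV1 (b)
gives `c (S v) ≤ c w`, and injectivity of the cost (no UFV1 (a)) gives `S v = w`.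
-/

namespace UniqueForward

variable {α : Type*}

/-- What the absence of UFV1 and UFV2 violations says about the nodes (the `v` with `S v ≠ v`). -/
structure NoViolations (S : α → α) (c : α → ℕ) : Prop where
  injOn_cost : Set.InjOn c {v | S v ≠ v}
  cost_succ_le : ∀ v w, S v ≠ v → S w ≠ w → c v < c w → c (S v) ≤ c w
  not_solution_of_lt : ∀ v w, S v ≠ v → S w ≠ w → c v < c w → S (S v) ≠ S v ∧ c v < c (S v)

lemma exists_max_cost_lt {P : α → Prop} {c : α → ℕ} {n : ℕ} (h : ∃ u, P u ∧ c u < n) :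
    ∃ v, P v ∧ c v < n ∧ ∀ u, P u → c u < n → c u ≤ c v := by
  set s := c '' {u | P u ∧ c u < n}
  have hne : s.Nonempty := Set.Nonempty.image c h
  have hbdd : BddAbove s := ⟨n, by rintro _ ⟨u, hu, rfl⟩; exact hu.2.le⟩
  obtain ⟨v, ⟨hPv, hvn⟩, hv⟩ := Nat.sSup_mem hne hbdd
  exact ⟨v, hPv, hvn, fun u hPu hun => hv ▸ le_csSup hbdd (Set.mem_image_of_mem c ⟨hPu, hun⟩)⟩

variable {S : α → α} {c : α → ℕ}

lemma NoViolations.exists_pred (h : NoViolations S c) {u w : α} (hu : S u ≠ u) (hw : S w ≠ w)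
    (huw : c u < c w) : ∃ v, S v ≠ v ∧ S v = w ∧ c v < c w := by
  obtain ⟨v, hv, hvw, hvmax⟩ := exists_max_cost_lt (P := fun v => S v ≠ v) ⟨u, hu, huw⟩
  obtain ⟨hSv, hv_lt⟩ := h.not_solution_of_lt v w hv hw hvw
  have hw_le : c w ≤ c (S v) := by
    by_contra! hlt
    exact (hvmax (S v) hSv hlt).not_gt hv_lt
  have hcost : c (S v) = c w := (h.cost_succ_le v w hv hw hvw).antisymm hw_le
  exact ⟨v, hv, h.injOn_cost hSv hw hcost, hvw⟩

theorem NoViolations.exists_iterate_eq (h : NoViolations S c) {z : α} (hz : S z ≠ z)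
    (hz_min : ∀ w, S w ≠ w → c z ≤ c w) {w : α} (hw : S w ≠ w) :
    ∃ k, w = S^[k] z ∧ ∀ j < k, c (S^[j] z) < c (S^[j + 1] z) := by
  induction hcw : c w using Nat.strong_induction_on generalizing w with
  | _ n ih =>
    by_cases hwz : w = z
    · exact ⟨0, hwz, fun j hj => absurd hj j.not_lt_zero⟩
    have hzw : c z < c w :=
      (hz_min w hw).lt_of_ne fun heq => hwz (h.injOn_cost hz hw heq).symm
    obtain ⟨v, hv, rfl, hvw⟩ := h.exists_pred hz hw hzw
    obtain ⟨k, rfl, hmono⟩ := ih (c v) (hcw ▸ hvw) hv rfl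
    refine ⟨k + 1, (Function.iterate_succ_apply' S k z).symm, fun j hj => ?_⟩
    rcases Nat.lt_succ_iff_lt_or_eq.mp hj with hjk | rfl
    · exact hmono j hjk
    · rwa [Function.iterate_succ_apply']

end UniqueForward

open UniqueForward in
theorem single_line_of_no_violations_general
    (d : ℕ)
    (S : (Fin d → Bool) → (Fin d → Bool)) (c : (Fin d → Bool) → ℕ)
    (hS : S (fun _ => false) ≠ (fun _ => false))
    (hc : c (fun _ => false) = 0)
    (hUFV1 : ¬ ∃ v w : Fin d → Bool, v ≠ w ∧ S v ≠ v ∧ S w ≠ w ∧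
      (c v = c w ∨ (c v < c w ∧ c w < c (S v))))
    (hUFV2 : ¬ ∃ v w : Fin d → Bool, v ≠ w ∧
      (S v ≠ v ∧ (S (S v) = S v ∨ c (S v) ≤ c v)) ∧ S w ≠ w ∧ c v < c w) :
    ∀ w : Fin d → Bool, S w ≠ w →
      ∃ k : ℕ, w = S^[k] (fun _ => false) ∧
        ∀ j < k, c (S^[j] (fun _ => false)) < c (S^[j + 1] (fun _ => false)) := by
  have h : NoViolations S c := by
    refine ⟨fun v hv w hw hvw => ?_, fun v w hv hw hvw => ?_, fun v w hv hw hvw => ?_⟩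
    · by_contra hne
      exact hUFV1 ⟨v, w, hne, hv, hw, Or.inl hvw⟩
    · by_contra! hlt
      exact hUFV1 ⟨v, w, ne_of_apply_ne c hvw.ne, hv, hw, Or.inr ⟨hvw, hlt⟩⟩
    · by_contra! hsol
      refine hUFV2 ⟨v, w, ne_of_apply_ne c hvw.ne, ⟨hv, ?_⟩, hw, hvw⟩
      by_cases hSS : S (S v) = S v
      · exact Or.inl hSS
      · exact Or.inr (hsol hSS)
  exact fun w hw => h.exists_iterate_eq hS (fun w _ => hc ▸ (c w).zero_le) hw

/-- In a Unique Forward EOPL instance with no UFV1 violation and no UFV2 violation, the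
nodes form a single line starting at `0^d`: every node `w` equals `S^[k](0^d)` for some
`k`, and the cost strictly increases along the iterates `S^[0](0^d), …, S^[k](0^d)`. -/
theorem single_line_of_no_violations
    (d : ℕ) (hd : 0 < d)
    (S : (Fin d → Bool) → (Fin d → Bool)) (c : (Fin d → Bool) → ℕ)
    (hS : S (fun _ => false) ≠ (fun _ => false))
    (hc : c (fun _ => false) = 0)
    (hUFV1 : ¬ ∃ v w : Fin d → Bool, v ≠ w ∧ S v ≠ v ∧ S w ≠ w ∧
      (c v = c w ∨ (c v < c w ∧ c w < c (S v))))
    (hUFV2 : ¬ ∃ v w : Fin d → Bool, v ≠ w ∧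
      (S v ≠ v ∧ (S (S v) = S v ∨ c (S v) ≤ c v)) ∧ S w ≠ w ∧ c v < c w) :
    ∀ w : Fin d → Bool, S w ≠ w →
      ∃ k : ℕ, w = S^[k] (fun _ => false) ∧
        ∀ j < k, c (S^[j] (fun _ => false)) < c (S^[j + 1] (fun _ => false)) :=
  single_line_of_no_violations_general d S c hS hc hUFV1 hUFV2
end
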